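/- Let s ∈ ℝ, p ∈ (0,∞), q ∈ (p,∞), and τ ∈ (0, 1/p - 1/q]. Define the sequence t = {t_Q} indexed by dyadic cubes of ℝⁿ by t_Q = |R_j|^{s/n + 1/2 + τ - 1/p} if Q = R_j := [0, 2^{-j})^n for some j ∈ ℤ, and t_Q = 0 otherwise. Then ‖t‖_{ḟ^{s,τ}_{p,q}} < ∞ while ‖t‖_{ḃ^{s,τ+1/q-1/p}_{q,q}} = ∞. -/

import Mathlib

open MeasureTheory ENNReal

/-- A dyadic cube `Q_{jk} = 2^{-j}([0,1)^n + k)` in `ℝⁿ`, recorded by its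
generation `j ∈ ℤ` and position `k ∈ ℤⁿ`. -/
structure DyadicCube (n : ℕ) where
  j : ℤ
  k : Fin n → ℤ

namespace DyadicCube

/-- The dyadic cube as a subset of `ℝⁿ`. -/
def toSet {n : ℕ} (Q : DyadicCube n) : Set (Fin n → ℝ) :=
  {x | ∀ i, (Q.k i : ℝ) * (2 : ℝ) ^ (-Q.j) ≤ x i ∧
        x i < ((Q.k i : ℝ) + 1) * (2 : ℝ) ^ (-Q.j)}

/-- The Lebesgue measure `|Q| = 2^{-jn}` of a dyadic cube, as an element of `ℝ≥0∞`. -/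
noncomputable def vol {n : ℕ} (Q : DyadicCube n) : ℝ≥0∞ :=
  (2 : ℝ≥0∞) ^ (-(Q.j : ℝ) * n)

/-- The characteristic function `χ_Q`, with values in `ℝ≥0∞`. -/
noncomputable def ind {n : ℕ} (Q : DyadicCube n) (x : Fin n → ℝ) : ℝ≥0∞ :=
  Q.toSet.indicator (fun _ => (1 : ℝ≥0∞)) x

end DyadicCube

open DyadicCube

/-- The coefficient `|Q|^{-s/n - 1/2}`. -/
noncomputable def coeff {n : ℕ} (s : ℝ) (Q : DyadicCube n) : ℝ≥0∞ :=
  Q.vol ^ (-(s / (n : ℝ)) - 1 / 2)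

/-- The `ℓ^q`-norm `(Σ_i a_i^q)^{1/q}` of a family of extended nonnegative reals,
with the usual modification (`sup`) when `q = ∞`. -/
noncomputable def lqSum {ι : Type*} (q : ℝ≥0∞) (a : ι → ℝ≥0∞) : ℝ≥0∞ :=
  if q = ∞ then ⨆ i, a i else (∑' i, a i ^ q.toReal) ^ (1 / q.toReal)

/-- The `L^p`-norm `(∫_A g^p dx)^{1/p}` over a set `A ⊆ ℝⁿ`, with the usual
modification (`sup` over `x ∈ A`) when `p = ∞`. -/
noncomputable def lpIntOn {n : ℕ} (p : ℝ≥0∞) (A : Set (Fin n → ℝ))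
    (g : (Fin n → ℝ) → ℝ≥0∞) : ℝ≥0∞ :=
  if p = ∞ then ⨆ x ∈ A, g x
  else (∫⁻ x in A, g x ^ p.toReal) ^ (1 / p.toReal)

/-- The Triebel–Lizorkin-type sequence norm
`‖t‖_{ḟ^{s,τ}_{p,q}} = sup_P |P|^{-τ} ( ∫_P ( Σ_{Q ⊆ P} [|Q|^{-s/n-1/2} |t_Q| χ_Q(x)]^q )^{p/q} dx )^{1/p}`,
with the usual modifications when `p = ∞` or `q = ∞`. -/
noncomputable def fNorm (n : ℕ) (s τ : ℝ) (p q : ℝ≥0∞) (t : DyadicCube n → ℂ) : ℝ≥0∞ :=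
  ⨆ P : DyadicCube n, P.vol ^ (-τ) *
    lpIntOn p P.toSet fun x =>
      lqSum q fun Q : {Q : DyadicCube n // Q.toSet ⊆ P.toSet} =>
        coeff s Q.1 * ‖t Q.1‖₊ * ind Q.1 x

/-- The Besov-type sequence norm
`‖t‖_{ḃ^{s,τ}_{p,q}} = sup_P |P|^{-τ} ( Σ_{j ≥ j_P} ( ∫_P [ Σ_{Q ⊆ P, ℓ(Q)=2^{-j}} |Q|^{-s/n-1/2} |t_Q| χ_Q(x) ]^p dx )^{q/p} )^{1/q}`,
with the usual modifications when `p = ∞` or `q = ∞`. -/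
noncomputable def bNorm (n : ℕ) (s τ : ℝ) (p q : ℝ≥0∞) (t : DyadicCube n → ℂ) : ℝ≥0∞ :=
  ⨆ P : DyadicCube n, P.vol ^ (-τ) *
    lqSum q fun j : {j : ℤ // P.j ≤ j} =>
      lpIntOn p P.toSet fun x =>
        ∑' Q : {Q : DyadicCube n // Q.toSet ⊆ P.toSet ∧ Q.j = j.1},
          coeff s Q.1 * ‖t Q.1‖₊ * ind Q.1 x

/-- The `ḟ^{σ}_{∞,∞} = ḃ^{σ}_{∞,∞}` sequence norm `sup_Q |Q|^{-σ/n - 1/2} |t_Q|`. -/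
noncomputable def supNorm (n : ℕ) (σ : ℝ) (t : DyadicCube n → ℂ) : ℝ≥0∞ :=
  ⨆ Q : DyadicCube n, coeff σ Q * ‖t Q‖₊

/-- The test sequence with `t_{R_j} = |R_j|^{s/n + 1/2 + τ - 1/p}` for
`R_j = [0,2^{-j})^n` (the dyadic cube with `k = 0`), and `t_Q = 0` otherwise. -/
noncomputable def testSeq (n : ℕ) (s τ p : ℝ) : DyadicCube n → ℂ := fun Q =>
  if Q.k = 0 then
    ((((2 : ℝ) ^ (-(Q.j : ℝ) * n)) ^ (s / n + 1 / 2 + τ - 1 / p) : ℝ) : ℂ)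
  else 0

/-- The cube `R_j = [0, 2^{-j})^n`. -/
def Rcube (n : ℕ) (j : ℤ) : DyadicCube n := ⟨j, 0⟩

/-!
Only the cubes `R_j` carry mass, with `|R_j|^{-s/n-1/2} t_{R_j} = 2^{jn(1/p-τ)}`, and a dyadic
cube contains some `R_j` only if it is itself an `R_{j₀}`, in which case the cubes below it
that matter are the nested `R_j`, `j ≥ j₀`. For the `ḟ^{s,τ}_{p,q}` norm over `P = R_{j₀}`,
the embedding `ℓ^p ⊆ ℓ^q` bounds `∫_P (Σ_Q ⋯^q)^{p/q}` by `Σ_{j ≥ j₀} 2^{-jnpτ}`, a geometric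
series of size `≈ |P|^{pτ}`, which `|P|^{-τ}` exactly compensates. With `p` replaced by `q`,
the integral over `R_0` (where `|R_0| = 1`, so the power of `|P|` is irrelevant) is
`Σ_{j ≥ 0} 2^{jn(q(1/p-τ)-1)}`, whose terms are `≥ 1` because `τ ≤ 1/p - 1/q`.
-/

namespace ENNReal

theorem rpow_sum_le_sum_rpow {ι : Type*} (s : Finset ι) (b : ι → ℝ≥0∞) {θ : ℝ}
    (hθ₀ : 0 < θ) (hθ₁ : θ ≤ 1) : (∑ i ∈ s, b i) ^ θ ≤ ∑ i ∈ s, b i ^ θ := by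
  induction s using Finset.cons_induction with
  | empty => simp [zero_rpow_of_pos hθ₀]
  | cons a s ha ih =>
    simp only [Finset.sum_cons]
    exact (rpow_add_le_add_rpow _ _ hθ₀.le hθ₁).trans (add_le_add_right ih _)

theorem rpow_tsum_le_tsum_rpow {ι : Type*} (b : ι → ℝ≥0∞) {θ : ℝ}
    (hθ₀ : 0 < θ) (hθ₁ : θ ≤ 1) : (∑' i, b i) ^ θ ≤ ∑' i, b i ^ θ := by
  rw [ENNReal.tsum_eq_iSup_sum]
  change orderIsoRpow θ hθ₀ _ ≤ _
  rw [(orderIsoRpow θ hθ₀).map_iSup]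
  exact iSup_le fun s => (rpow_sum_le_sum_rpow s b hθ₀ hθ₁).trans (ENNReal.sum_le_tsum s)

theorem tsum_two_rpow_add_mul (a c : ℝ) :
    ∑' m : ℕ, (2 : ℝ≥0∞) ^ ((a + m) * c) = 2 ^ (a * c) * (1 - 2 ^ c)⁻¹ := by
  have h : ∀ m : ℕ, (2 : ℝ≥0∞) ^ ((a + m) * c) = 2 ^ (a * c) * (2 ^ c) ^ m := fun m => by
    rw [← rpow_natCast, ← rpow_mul, ← rpow_add _ _ two_ne_zero ofNat_ne_top]
    ring_nf
  simp only [h, ENNReal.tsum_mul_left, tsum_geometric]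

end ENNReal

theorem lqSum_ofReal {ι : Type*} {q : ℝ} (hq : 0 ≤ q) (a : ι → ℝ≥0∞) :
    lqSum (ENNReal.ofReal q) a = (∑' i, a i ^ q) ^ (1 / q) := by
  rw [lqSum, if_neg ofReal_ne_top, toReal_ofReal hq]

theorem lpIntOn_ofReal {n : ℕ} {p : ℝ} (hp : 0 ≤ p) (A : Set (Fin n → ℝ))
    (g : (Fin n → ℝ) → ℝ≥0∞) :
    lpIntOn (ENNReal.ofReal p) A g = (∫⁻ x in A, g x ^ p) ^ (1 / p) := by
  rw [lpIntOn, if_neg ofReal_ne_top, toReal_ofReal hp]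

theorem lqSum_rpow_le_tsum_rpow {ι : Type*} (a : ι → ℝ≥0∞) {p q : ℝ} (hp : 0 < p)
    (hpq : p ≤ q) : lqSum (ENNReal.ofReal q) a ^ p ≤ ∑' i, a i ^ p := by
  have hq : 0 < q := hp.trans_le hpq
  rw [lqSum_ofReal hq.le, ← rpow_mul]
  refine (rpow_tsum_le_tsum_rpow _ (by positivity) ?_).trans_eq (tsum_congr fun i => ?_)
  · rwa [one_div_mul_eq_div, div_le_one hq]
  · rw [← rpow_mul]
    field_simp

namespace DyadicCube

variable {n : ℕ}

theorem toSet_eq_pi (Q : DyadicCube n) :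
    Q.toSet = Set.univ.pi fun i =>
      Set.Ico ((Q.k i : ℝ) * 2 ^ (-Q.j)) (((Q.k i : ℝ) + 1) * 2 ^ (-Q.j)) := by
  ext x
  simp [toSet, Set.mem_pi]

theorem measurableSet_toSet (Q : DyadicCube n) : MeasurableSet Q.toSet := by
  rw [toSet_eq_pi]
  exact MeasurableSet.univ_pi fun _ => measurableSet_Ico

theorem volume_toSet (Q : DyadicCube n) : volume Q.toSet = Q.vol := by
  have hside : ∀ i, ENNReal.ofReal (((Q.k i : ℝ) + 1) * 2 ^ (-Q.j) - Q.k i * 2 ^ (-Q.j)) =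
      2 ^ (-(Q.j : ℝ)) := fun i => by
    rw [add_one_mul, add_sub_cancel_left, ← Real.rpow_intCast, ← ofReal_rpow_of_pos two_pos,
      ofReal_ofNat, Int.cast_neg]
  simp only [toSet_eq_pi, volume_pi_pi, Real.volume_Ico, hside, Finset.prod_const,
    Finset.card_univ, Fintype.card_fin, vol]
  rw [← rpow_natCast, ← rpow_mul]

theorem zero_mem_toSet_iff (Q : DyadicCube n) : 0 ∈ Q.toSet ↔ Q.k = 0 := by
  have hside : (0 : ℝ) < 2 ^ (-Q.j) := zpow_pos two_pos _
  simp only [toSet, Set.mem_ofPred_eq, Pi.zero_apply, funext_iff]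
  refine forall_congr' fun i => ⟨fun ⟨hlo, hhi⟩ => ?_, fun hk => by simpa [hk] using hside⟩
  have hle : (Q.k i : ℝ) ≤ 0 := nonpos_of_mul_nonpos_left hlo hside
  have hlt : (0 : ℝ) < Q.k i + 1 := pos_of_mul_pos_left hhi hside.le
  have : Q.k i ≤ 0 ∧ 0 < Q.k i + 1 := ⟨by exact_mod_cast hle, by exact_mod_cast hlt⟩
  omega

theorem measurable_ind (Q : DyadicCube n) : Measurable Q.ind :=
  measurable_const.indicator Q.measurableSet_toSet

theorem mul_ind_rpow (Q : DyadicCube n) (x : Fin n → ℝ) (c : ℝ≥0∞) {r : ℝ} (hr : 0 < r) :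
    (c * Q.ind x) ^ r = c ^ r * Q.ind x := by
  by_cases hx : x ∈ Q.toSet
  · simp [ind, Set.indicator_of_mem hx]
  · simp [ind, Set.indicator_of_notMem hx, zero_rpow_of_pos hr]

theorem setLIntegral_ind_of_subset (Q : DyadicCube n) {A : Set (Fin n → ℝ)}
    (h : Q.toSet ⊆ A) : ∫⁻ x in A, Q.ind x = Q.vol := by
  unfold ind
  rw [lintegral_indicator_const Q.measurableSet_toSet, one_mul,
    Measure.restrict_apply Q.measurableSet_toSet, Set.inter_eq_left.2 h, volume_toSet]

theorem eq_Rcube_of_k_eq_zero {Q : DyadicCube n} (hQ : Q.k = 0) : Q = Rcube n Q.j := by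
  cases Q
  simp_all [Rcube]

theorem Rcube_subset_Rcube {j₀ j : ℤ} (h : j₀ ≤ j) :
    (Rcube n j).toSet ⊆ (Rcube n j₀).toSet := fun x hx i => by
  simp only [Rcube, toSet, Set.mem_ofPred_eq, Pi.zero_apply, Int.cast_zero, zero_mul, zero_add,
    one_mul] at hx ⊢
  exact ⟨(hx i).1, (hx i).2.trans_le (zpow_le_zpow_right₀ one_le_two (neg_le_neg h))⟩

theorem Rcube_subset_Rcube_iff (hn : 0 < n) {j₀ j : ℤ} :
    (Rcube n j).toSet ⊆ (Rcube n j₀).toSet ↔ j₀ ≤ j := by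
  refine ⟨fun h => ?_, Rcube_subset_Rcube⟩
  by_contra! hlt
  have hmem : (fun _ => (2 : ℝ) ^ (-j₀)) ∈ (Rcube n j).toSet := fun i => by
    simp only [Rcube, Pi.zero_apply, Int.cast_zero, zero_mul, zero_add, one_mul]
    exact ⟨by positivity, zpow_lt_zpow_right₀ one_lt_two (neg_lt_neg hlt)⟩
  simpa [Rcube] using (h hmem ⟨0, hn⟩).2

theorem tsum_subset_Rcube (hn : 0 < n) (j₀ : ℤ) (c : DyadicCube n → ℝ≥0∞)
    (hc : ∀ Q : DyadicCube n, Q.k ≠ 0 → c Q = 0) :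
    ∑' Q : {Q : DyadicCube n // Q.toSet ⊆ (Rcube n j₀).toSet}, c Q.1 =
      ∑' m : ℕ, c (Rcube n (j₀ + m)) := by
  let R : ℕ → {Q : DyadicCube n // Q.toSet ⊆ (Rcube n j₀).toSet} :=
    fun m => ⟨Rcube n (j₀ + m), Rcube_subset_Rcube (by omega)⟩
  refine (Function.Injective.tsum_eq (f := fun Q => c Q.1) (g := R) ?_ ?_).symm
  · intro a b hab
    have : j₀ + a = j₀ + b := congrArg (fun Q => Q.1.j) hab
    omega
  · rintro ⟨Q, hQ⟩ hcQ
    have hk : Q.k = 0 := not_not.1 (mt (hc Q) hcQ)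
    have hj : j₀ ≤ Q.j := (Rcube_subset_Rcube_iff hn).1 (eq_Rcube_of_k_eq_zero hk ▸ hQ)
    refine ⟨(Q.j - j₀).toNat, Subtype.ext ?_⟩
    change Rcube n _ = Q
    conv_rhs => rw [eq_Rcube_of_k_eq_zero hk]
    congr 1
    omega

end DyadicCube

section testSeq

variable {n : ℕ} (s τ p : ℝ)

theorem testSeq_of_k_ne_zero {Q : DyadicCube n} (hQ : Q.k ≠ 0) : testSeq n s τ p Q = 0 :=
  if_neg hQ

theorem coeff_mul_nnnorm_testSeq_Rcube (j : ℤ) :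
    coeff s (Rcube n j) * ‖testSeq n s τ p (Rcube n j)‖₊ =
      (2 : ℝ≥0∞) ^ (j * (n * (1 / p - τ))) := by
  have hvol : (0 : ℝ) < 2 ^ (-(j : ℝ) * n) := by positivity
  have ht : testSeq n s τ p (Rcube n j) =
      ((2 ^ (-(j : ℝ) * n)) ^ (s / n + 1 / 2 + τ - 1 / p) : ℝ) := if_pos rfl
  rw [ht, Complex.nnnorm_real, ← enorm_eq_nnnorm,
    Real.enorm_eq_ofReal (by positivity), ← ofReal_rpow_of_pos hvol,
    ← ofReal_rpow_of_pos two_pos, ofReal_ofNat, coeff, vol, Rcube, ← rpow_mul, ← rpow_mul,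
    ← rpow_add _ _ two_ne_zero ofNat_ne_top]
  ring_nf

theorem setLIntegral_tsum_testSeq_rpow (hn : 0 < n) (j₀ : ℤ) {r : ℝ} (hr : 0 < r) :
    ∫⁻ x in (Rcube n j₀).toSet,
      ∑' Q : {Q : DyadicCube n // Q.toSet ⊆ (Rcube n j₀).toSet},
        (coeff s Q.1 * ‖testSeq n s τ p Q.1‖₊ * Q.1.ind x) ^ r =
      ∑' m : ℕ, (2 : ℝ≥0∞) ^ ((j₀ + m) * (n * ((1 / p - τ) * r - 1))) := by
  have hsum : ∀ x, ∑' Q : {Q : DyadicCube n // Q.toSet ⊆ (Rcube n j₀).toSet},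
      (coeff s Q.1 * ‖testSeq n s τ p Q.1‖₊ * Q.1.ind x) ^ r =
      ∑' m : ℕ, (2 : ℝ≥0∞) ^ ((j₀ + m) * (n * (1 / p - τ) * r)) * (Rcube n (j₀ + m)).ind x := by
    intro x
    refine (tsum_subset_Rcube hn j₀ (fun Q => (coeff s Q * ‖testSeq n s τ p Q‖₊ * Q.ind x) ^ r)
      fun Q hQ => ?_).trans (tsum_congr fun m => ?_)
    · simp [testSeq_of_k_ne_zero s τ p hQ, zero_rpow_of_pos hr]
    · rw [coeff_mul_nnnorm_testSeq_Rcube, mul_ind_rpow _ _ _ hr, ← rpow_mul]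
      push_cast
      ring_nf
  rw [lintegral_congr hsum, lintegral_tsum fun m => ((measurable_ind _).const_mul _).aemeasurable]
  refine tsum_congr fun m => ?_
  rw [lintegral_const_mul _ (measurable_ind _),
    setLIntegral_ind_of_subset _ (Rcube_subset_Rcube (by omega)), vol, Rcube,
    ← rpow_add _ _ two_ne_zero ofNat_ne_top]
  push_cast
  ring_nf

end testSeq

theorem fNorm_testSeq_ne_top {n : ℕ} (hn : 0 < n) (s : ℝ) {p q τ : ℝ} (hp : 0 < p)
    (hpq : p ≤ q) (hτ : 0 < τ) :
    fNorm n s τ (ENNReal.ofReal p) (ENNReal.ofReal q) (testSeq n s τ p) ≠ ∞ := by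
  have hc : (n : ℝ) * ((1 / p - τ) * p - 1) = -(n * p * τ) := by field_simp; ring
  have hc_neg : -(n * p * τ) < 0 := by
    have : (0 : ℝ) < n := by exact_mod_cast hn
    exact neg_neg_of_pos (by positivity)
  refine ne_top_of_le_ne_top (b := ((1 - 2 ^ (-(n * p * τ)))⁻¹) ^ (1 / p)) ?_
    (iSup_le fun P => ?_)
  · refine rpow_ne_top_of_nonneg (by positivity) (inv_ne_top.2 (tsub_pos_of_lt ?_).ne')
    exact rpow_lt_one_of_one_lt_of_neg one_lt_two hc_neg
  rw [lpIntOn_ofReal hp.le]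
  by_cases hP : P.k = 0
  · obtain ⟨j₀, rfl⟩ : ∃ j₀, P = Rcube n j₀ := ⟨P.j, eq_Rcube_of_k_eq_zero hP⟩
    calc _ ≤ (Rcube n j₀).vol ^ (-τ) * (∫⁻ x in (Rcube n j₀).toSet,
            ∑' Q : {Q : DyadicCube n // Q.toSet ⊆ (Rcube n j₀).toSet},
              (coeff s Q.1 * ‖testSeq n s τ p Q.1‖₊ * Q.1.ind x) ^ p) ^ (1 / p) := by
          gcongr with x
          exact lqSum_rpow_le_tsum_rpow _ hp hpq
      _ = 2 ^ (-(j₀ : ℝ) * n * -τ) *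
            (2 ^ (j₀ * -(n * p * τ)) * (1 - 2 ^ (-(n * p * τ)))⁻¹) ^ (1 / p) := by
          rw [setLIntegral_tsum_testSeq_rpow s τ p hn j₀ hp, hc, tsum_two_rpow_add_mul, vol,
            Rcube, ← rpow_mul]
      _ = ((1 - 2 ^ (-(n * p * τ)))⁻¹) ^ (1 / p) := by
          rw [mul_rpow_of_nonneg _ _ (by positivity), ← mul_assoc, ← rpow_mul,
            ← rpow_add _ _ two_ne_zero ofNat_ne_top]
          field_simp
          simp
  · have hvanish : ∀ Q : {Q : DyadicCube n // Q.toSet ⊆ P.toSet}, testSeq n s τ p Q.1 = 0 :=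
      fun Q => testSeq_of_k_ne_zero s τ p fun hQ =>
        hP ((zero_mem_toSet_iff P).1 (Q.2 ((zero_mem_toSet_iff Q.1).2 hQ)))
    have hq : 0 < q := hp.trans_le hpq
    simp [hvanish, lqSum_ofReal hq.le, zero_rpow_of_pos hq, zero_rpow_of_pos hp,
      zero_rpow_of_pos (inv_pos.2 hp), zero_rpow_of_pos (inv_pos.2 hq)]

theorem fNorm_testSeq_eq_top {n : ℕ} (hn : 0 < n) (s σ : ℝ) {p q τ : ℝ} (hq : 0 < q)
    (hτ : τ ≤ 1 / p - 1 / q) :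
    fNorm n s σ (ENNReal.ofReal q) (ENNReal.ofReal q) (testSeq n s τ p) = ∞ := by
  have hc : 0 ≤ (n : ℝ) * ((1 / p - τ) * q - 1) := by
    have : 1 ≤ (1 / p - τ) * q := by rw [← div_le_iff₀ hq]; linarith
    exact mul_nonneg n.cast_nonneg (by linarith)
  have hge : 1 ≤ (2 : ℝ≥0∞) ^ ((n : ℝ) * ((1 / p - τ) * q - 1)) := by
    simpa using rpow_le_rpow_of_exponent_le one_le_two hc
  have hvol : (Rcube n 0).vol = 1 := by simp [vol, Rcube]
  refine eq_top_iff.2 (le_iSup_of_le (Rcube n 0) ?_)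
  simp_rw [hvol, one_rpow, one_mul, lpIntOn_ofReal hq.le, lqSum_ofReal hq.le, ← rpow_mul,
    one_div_mul_cancel hq.ne', rpow_one]
  rw [setLIntegral_tsum_testSeq_rpow s τ p hn 0 hq, tsum_two_rpow_add_mul,
    tsub_eq_zero_of_le hge, ENNReal.inv_zero, mul_top (by positivity),
    top_rpow_of_pos (by positivity)]

/-- for `s ∈ ℝ`, `p ∈ (0,∞)`, `q ∈ (p,∞)`, `τ ∈ (0, 1/p - 1/q]`, the
sequence `t` with `t_{R_j} = |R_j|^{s/n+1/2+τ-1/p}` (`R_j = [0,2^{-j})^n`) and `t_Q = 0`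
otherwise satisfies `‖t‖_{ḟ^{s,τ}_{p,q}} < ∞` but `‖t‖_{ḃ^{s,τ+1/q-1/p}_{q,q}} = ∞`
(the latter norm, having equal integrability indices, is given by the
`∫_P Σ_{Q⊆P}` formula). -/
theorem stmt3 (n : ℕ) (hn : 0 < n) (s p q τ : ℝ)
    (hp : 0 < p) (hpq : p < q) (hτ : 0 < τ) (hτ' : τ ≤ 1 / p - 1 / q) :
    fNorm n s τ (ENNReal.ofReal p) (ENNReal.ofReal q) (testSeq n s τ p) ≠ ∞ ∧
    fNorm n s (τ + 1 / q - 1 / p) (ENNReal.ofReal q) (ENNReal.ofReal q)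
      (testSeq n s τ p) = ∞ :=
  ⟨fNorm_testSeq_ne_top hn s hp hpq.le hτ,
    fNorm_testSeq_eq_top hn s _ (hp.trans hpq) hτ'⟩
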